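/- Let G be a finite connected simple graph with at least two vertices, and suppose a group Γ acts on G by graph automorphisms transitively on the vertex set. Then for every vertex v of G, the induced subgraph of G on the complement of {v} is connected. -/
import Mathlib


open SimpleGraph

lemma exists_delete_vertex_connected {V : Type*} [Fintype V] (G : SimpleGraph V)
    (hconn : G.Connected) (hcard : 1 < Fintype.card V) :
    ∃ u : V, (G.induce ({u}ᶜ : Set V)).Connected := by
  classical
  have hne : Nonempty V := Fintype.card_pos_iff.mp (by omega)
  obtain ⟨r⟩ := hne
  obtain ⟨u, -, hu⟩ := Finset.exists_max_image Finset.univ (fun x => G.dist r x)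
    ⟨r, Finset.mem_univ r⟩
  have hu' : ∀ x : V, G.dist r x ≤ G.dist r u := fun x => hu x (Finset.mem_univ x)
  have hur : u ≠ r := by
    obtain ⟨w, hw⟩ := Fintype.exists_ne_of_one_lt_card hcard r
    intro h
    have h1 : 0 < G.dist r w := hconn.pos_dist_of_ne (Ne.symm hw)
    have h2 := hu' w
    rw [h, SimpleGraph.dist_self] at h2
    omega
  refine ⟨u, ?_⟩
  apply G.induce_connected_of_patches r (by simpa using Ne.symm hur)
  intro w hw
  have hwu : w ≠ u := by simpa using hw
  obtain ⟨p, hp⟩ := hconn.exists_walk_length_eq_dist r w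
  have hsup : u ∉ p.support := by
    intro h
    have hspec := SimpleGraph.Walk.take_spec p h
    have hlen : (p.takeUntil u h).length + (p.dropUntil u h).length = p.length := by
      conv_rhs => rw [← hspec]
      rw [SimpleGraph.Walk.length_append]
    have h1 : G.dist r u ≤ (p.takeUntil u h).length := SimpleGraph.dist_le _
    have h2 : G.dist u w ≤ (p.dropUntil u h).length := SimpleGraph.dist_le _
    have h3 : 0 < G.dist u w := hconn.pos_dist_of_ne (Ne.symm hwu)
    have h4 := hu' w
    omega
  refine ⟨{x | x ∈ p.support}, ?_, p.start_mem_support, p.end_mem_support, ?_⟩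
  · intro x hx
    simp only [Set.mem_compl_iff, Set.mem_singleton_iff]
    rintro rfl
    exact hsup hx
  · exact (p.connected_induce_support).preconnected _ _

/-- Let `G` be a finite connected simple graph with at least two
vertices, and suppose a group `Γ` acts on `G` by graph automorphisms, transitively on
the vertex set. Then for every vertex `v`, the induced subgraph of `G` on the
complement of `{v}` is connected. -/
theorem induce_compl_singleton_connected_of_vertex_transitive
    {V : Type*} [Fintype V] (G : SimpleGraph V) (hconn : G.Connected)
    (hcard : 1 < Fintype.card V)
    {Γ : Type*} [Group Γ] [MulAction Γ V]
    (hact : ∀ (γ : Γ) (a b : V), G.Adj (γ • a) (γ • b) ↔ G.Adj a b)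
    (htrans : ∀ a b : V, ∃ γ : Γ, γ • a = b)
    (v : V) :
    (G.induce ({v}ᶜ : Set V)).Connected := by
  obtain ⟨u, hu⟩ := exists_delete_vertex_connected G hconn hcard
  obtain ⟨γ, hγ⟩ := htrans u v
  have hmem : ∀ x : V, x ∈ ({u}ᶜ : Set V) ↔ γ • x ∈ ({v}ᶜ : Set V) := by
    intro x
    simp only [Set.mem_compl_iff, Set.mem_singleton_iff, not_iff_not]
    constructor
    · rintro rfl; exact hγ
    · intro h; exact smul_left_cancel γ (by rw [h, hγ])
  let e : G.induce ({u}ᶜ : Set V) ≃g G.induce ({v}ᶜ : Set V) :=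
    { toEquiv := (MulAction.toPerm γ).subtypeEquiv hmem
      map_rel_iff' := by
        intro a b
        exact hact γ a b }
  exact e.connected_iff.mp hu
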